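/- For all sufficiently large n one has nF̄(b)<1 for every b>n^{β+ε} (so that θ_{n,b}>0 is well defined), and sup{ n·θ_{n,b}^κ : b>n^{β+ε} } → 0 as n→∞. -/

import Mathlib

/-!
Potter's bounds: a positive, locally bounded slowly varying `L` satisfies
`L(2x) ≤ 2^δ L(x)` for large `x`, which propagates dyadically from a single interval `[X, 2X]`
to `L(x) ≲ x^δ`; applied to `1/L` it gives `x^{-δ} ≲ L(x)`. For `L(x) = x^α F̄(x)` local
boundedness comes from the monotonicity of `F̄`.

Since `α(β+ε) > 1`, the upper bound gives `n F̄(b) ≤ n F̄(n^{β+ε}) → 0`. The lower bound gives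
`-log F̄(b) = O(log b)`, so `θ_{n,b} ≲ log b / b ≤ log t / t` with `t = n^{β+ε}`, and
`n θ_{n,b}^κ ≲ (log n)^κ n^{1-κ(β+ε)} → 0` because `κ(β+ε) > 1`.
-/

open MeasureTheory ProbabilityTheory Filter

noncomputable section

/-- Right tail `F̄(x) = F((x,∞))` of a measure on `ℝ`, as a real number. -/
def rtail (F : Measure ℝ) (x : ℝ) : ℝ := (F (Set.Ioi x)).toReal

/-- `L` is slowly varying at infinity. -/
def SlowlyVarying (L : ℝ → ℝ) : Prop :=
  ∀ t > 0, Tendsto (fun x => L (t * x) / L x) atTop (nhds 1)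

/-- The twisting parameter `θ_{n,b} = -log(n F̄(b)) / b`. -/
def theta (F : Measure ℝ) (n : ℕ) (b : ℝ) : ℝ := -Real.log ((n : ℝ) * rtail F b) / b

open Real Set Topology

theorem forall_ge_of_doubling {X : ℝ} (hX : 0 < X) {P : ℝ → Prop}
    (hbase : ∀ x ∈ Icc X (2 * X), P x) (hstep : ∀ x ≥ X, P x → P (2 * x)) :
    ∀ x ≥ X, P x := by
  have hdyadic : ∀ k : ℕ, ∀ x ∈ Icc X (2 ^ (k + 1) * X), P x := by
    intro k
    induction k with
    | zero => simpa using hbase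
    | succ k ih =>
      rintro x ⟨hXx, hx⟩
      rcases le_or_gt x (2 ^ (k + 1) * X) with hle | hgt
      · exact ih x ⟨hXx, hle⟩
      · have hXk : X ≤ 2 ^ k * X := le_mul_of_one_le_left hX.le (one_le_pow₀ one_le_two)
        have hhalf : x / 2 ∈ Icc X (2 ^ (k + 1) * X) := by
          have h1 : (2 : ℝ) ^ (k + 1) * X = 2 * (2 ^ k * X) := by ring
          have h2 : (2 : ℝ) ^ (k + 1 + 1) * X = 2 * (2 ^ (k + 1) * X) := by ring
          constructor <;> linarith
        simpa [mul_div_cancel₀] using hstep _ hhalf.1 (ih _ hhalf)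
  intro x hx
  obtain ⟨k, hk⟩ := pow_unbounded_of_one_lt (x / X) one_lt_two
  refine hdyadic k x ⟨hx, ?_⟩
  rw [div_lt_iff₀ hX] at hk
  have h1 : (2 : ℝ) ^ (k + 1) * X = 2 * (2 ^ k * X) := by ring
  have h2 : 0 < (2 : ℝ) ^ k * X := by positivity
  linarith

namespace SlowlyVarying

variable {L : ℝ → ℝ}

theorem inv (hL : SlowlyVarying L) : SlowlyVarying fun x => (L x)⁻¹ := by
  intro t ht
  simpa only [inv_div_inv, inv_div, inv_one] using (hL t ht).inv₀ one_ne_zero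

theorem exists_eventually_le_mul_rpow (hL : SlowlyVarying L) (hpos : ∀ x > 0, 0 < L x)
    (hbdd : ∀ a > 0, ∀ b, BddAbove (L '' Icc a b)) {δ : ℝ} (hδ : 0 < δ) :
    ∃ C > 0, ∀ᶠ x in atTop, L x ≤ C * x ^ δ := by
  obtain ⟨X, hX1, hX⟩ : ∃ X ≥ 1, ∀ x ≥ X, L (2 * x) / L x < 2 ^ δ := by
    obtain ⟨X, hX⟩ := eventually_atTop.1 <|
      (hL 2 two_pos).eventually (gt_mem_nhds (one_lt_rpow one_lt_two hδ))
    exact ⟨max X 1, le_max_right _ _, fun x hx => hX x (le_of_max_le_left hx)⟩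
  have hX0 : 0 < X := by linarith
  obtain ⟨M, hM⟩ := hbdd X hX0 (2 * X)
  have hLM : ∀ x ∈ Icc X (2 * X), L x ≤ M := fun x hx => hM (mem_image_of_mem L hx)
  have hM0 : 0 < M := (hpos X hX0).trans_le (hLM X ⟨le_rfl, by linarith⟩)
  refine ⟨M * X ^ (-δ), by positivity, eventually_atTop.2 ⟨X, forall_ge_of_doubling hX0 ?_ ?_⟩⟩
  · intro x hx
    calc L x ≤ M * (X ^ (-δ) * X ^ δ) := by
          rw [← rpow_add hX0, neg_add_cancel, rpow_zero, mul_one]; exact hLM x hx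
      _ ≤ M * X ^ (-δ) * x ^ δ := by
          rw [mul_assoc]; gcongr; exact hx.1
  · intro x hx hLx
    have hx0 : 0 < x := hX0.trans_le hx
    calc L (2 * x) ≤ 2 ^ δ * L x :=
          ((div_lt_iff₀ (hpos x hx0)).1 (hX x hx)).le
      _ ≤ 2 ^ δ * (M * X ^ (-δ) * x ^ δ) := by gcongr
      _ = M * X ^ (-δ) * (2 * x) ^ δ := by rw [mul_rpow two_pos.le hx0.le]; ring

theorem exists_eventually_mul_rpow_neg_le (hL : SlowlyVarying L) (hpos : ∀ x > 0, 0 < L x)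
    (hbdd : ∀ a > 0, ∀ b, BddAbove ((fun x => (L x)⁻¹) '' Icc a b)) {δ : ℝ} (hδ : 0 < δ) :
    ∃ c > 0, ∀ᶠ x in atTop, c * x ^ (-δ) ≤ L x := by
  obtain ⟨C, hC, hev⟩ :=
    hL.inv.exists_eventually_le_mul_rpow (fun x hx => inv_pos.2 (hpos x hx)) hbdd hδ
  refine ⟨C⁻¹, inv_pos.2 hC, ?_⟩
  filter_upwards [hev, eventually_gt_atTop 0] with x hx hx0
  rw [rpow_neg hx0.le, ← mul_inv]
  exact inv_le_of_inv_le₀ (hpos x hx0) hx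

theorem tendsto_mul_rpow_neg (hL : SlowlyVarying L) (hpos : ∀ x > 0, 0 < L x)
    (hbdd : ∀ a > 0, ∀ b, BddAbove (L '' Icc a b)) {δ : ℝ} (hδ : 0 < δ) :
    Tendsto (fun x => L x * x ^ (-δ)) atTop (𝓝 0) := by
  obtain ⟨C, -, hev⟩ := hL.exists_eventually_le_mul_rpow hpos hbdd (half_pos hδ)
  have hlim : Tendsto (fun x : ℝ => C * x ^ (-(δ / 2))) atTop (𝓝 0) := by
    simpa using (tendsto_rpow_neg_atTop (half_pos hδ)).const_mul C
  refine tendsto_of_tendsto_of_tendsto_of_le_of_le' tendsto_const_nhds hlim ?_ ?_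
  · filter_upwards [eventually_gt_atTop 0] with x hx
    exact mul_nonneg (hpos x hx).le (rpow_nonneg hx.le _)
  · filter_upwards [hev, eventually_gt_atTop 0] with x hx hx0
    calc L x * x ^ (-δ) ≤ C * x ^ (δ / 2) * x ^ (-δ) := by gcongr
      _ = C * x ^ (-(δ / 2)) := by rw [mul_assoc, ← rpow_add hx0]; ring_nf

end SlowlyVarying

theorem rtail_nonneg (F : Measure ℝ) (x : ℝ) : 0 ≤ rtail F x := ENNReal.toReal_nonneg

theorem rtail_antitone (F : Measure ℝ) [IsFiniteMeasure F] : Antitone (rtail F) :=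
  fun _ _ h => ENNReal.toReal_mono (measure_ne_top F _) (measure_mono (Ioi_subset_Ioi h))

section RegularlyVaryingTail

variable {F : Measure ℝ} {α : ℝ} {L : ℝ → ℝ}

theorem rtail_pos_of_eq (hLpos : ∀ x > 0, 0 < L x)
    (htail : ∀ x > 0, rtail F x = L x * x ^ (-α)) {x : ℝ} (hx : 0 < x) : 0 < rtail F x := by
  rw [htail x hx]; exact mul_pos (hLpos x hx) (rpow_pos_of_pos hx _)

theorem eq_rtail_mul_rpow (htail : ∀ x > 0, rtail F x = L x * x ^ (-α)) {x : ℝ} (hx : 0 < x) :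
    L x = rtail F x * x ^ α := by
  rw [htail x hx, mul_assoc, ← rpow_add hx, neg_add_cancel, rpow_zero, mul_one]

theorem bddAbove_image_Icc_of_rtail_eq [IsFiniteMeasure F] (hα : 0 ≤ α)
    (htail : ∀ x > 0, rtail F x = L x * x ^ (-α)) {a : ℝ} (ha : 0 < a) (b : ℝ) :
    BddAbove (L '' Icc a b) := by
  refine ⟨rtail F a * b ^ α, forall_mem_image.2 fun x hx => ?_⟩
  have hx0 : 0 < x := ha.trans_le hx.1
  rw [eq_rtail_mul_rpow htail hx0]
  exact mul_le_mul (rtail_antitone F hx.1) (rpow_le_rpow hx0.le hx.2 hα)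
    (rpow_nonneg hx0.le _) (rtail_nonneg F a)

theorem bddAbove_inv_image_Icc_of_rtail_eq [IsFiniteMeasure F] (hα : 0 ≤ α)
    (hLpos : ∀ x > 0, 0 < L x) (htail : ∀ x > 0, rtail F x = L x * x ^ (-α))
    {a : ℝ} (ha : 0 < a) (b : ℝ) :
    BddAbove ((fun x => (L x)⁻¹) '' Icc a b) := by
  refine ⟨(rtail F b * a ^ α)⁻¹, forall_mem_image.2 fun x hx => ?_⟩
  have hx0 : 0 < x := ha.trans_le hx.1
  have hb0 : 0 < rtail F b := rtail_pos_of_eq hLpos htail (hx0.trans_le hx.2)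
  rw [eq_rtail_mul_rpow htail hx0]
  exact inv_anti₀ (by positivity) (mul_le_mul (rtail_antitone F hx.2)
    (rpow_le_rpow ha.le hx.1 hα) (by positivity) (rtail_nonneg F x))

theorem tendsto_rpow_mul_rtail [IsFiniteMeasure F] (hLpos : ∀ x > 0, 0 < L x)
    (hL : SlowlyVarying L) (htail : ∀ x > 0, rtail F x = L x * x ^ (-α))
    {γ : ℝ} (hγ : 0 ≤ γ) (hγα : γ < α) :
    Tendsto (fun x => x ^ γ * rtail F x) atTop (𝓝 0) := by
  have hlim := hL.tendsto_mul_rpow_neg hLpos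
    (fun a ha => bddAbove_image_Icc_of_rtail_eq (hγ.trans hγα.le) htail ha) (sub_pos.2 hγα)
  refine hlim.congr' ?_
  filter_upwards [eventually_gt_atTop 0] with x hx
  rw [htail x hx, mul_left_comm, ← rpow_add hx]
  ring_nf

theorem exists_eventually_neg_log_rtail_le [IsFiniteMeasure F] (hα : 0 ≤ α)
    (hLpos : ∀ x > 0, 0 < L x) (hL : SlowlyVarying L)
    (htail : ∀ x > 0, rtail F x = L x * x ^ (-α)) :
    ∃ A > 0, ∀ᶠ x in atTop, -log (rtail F x) ≤ A * log x := by
  obtain ⟨c, hc, hev⟩ := hL.exists_eventually_mul_rpow_neg_le hLpos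
    (fun a ha => bddAbove_inv_image_Icc_of_rtail_eq hα hLpos htail ha) one_pos
  refine ⟨α + 2, by linarith, ?_⟩
  filter_upwards [hev, eventually_ge_atTop c⁻¹, eventually_gt_atTop 0] with x hLx hcx hx
  have hlow : c * x ^ (-(α + 1)) ≤ rtail F x :=
    calc c * x ^ (-(α + 1)) = c * x ^ (-1 : ℝ) * x ^ (-α) := by
          rw [mul_assoc, ← rpow_add hx]; ring_nf
      _ ≤ L x * x ^ (-α) := by gcongr
      _ = rtail F x := (htail x hx).symm
  have hlogc : -log c ≤ log x := by
    rw [← log_inv]; exact log_le_log (inv_pos.2 hc) hcx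
  have := log_le_log (by positivity) hlow
  rw [log_mul hc.ne' (by positivity), log_rpow hx] at this
  linarith

theorem tendsto_natCast_mul_rtail_rpow [IsFiniteMeasure F] (hLpos : ∀ x > 0, 0 < L x)
    (hL : SlowlyVarying L) (htail : ∀ x > 0, rtail F x = L x * x ^ (-α))
    {s : ℝ} (hs : 0 < s) (hαs : 1 < α * s) :
    Tendsto (fun n : ℕ => (n : ℝ) * rtail F ((n : ℝ) ^ s)) atTop (𝓝 0) := by
  have hlim := (tendsto_rpow_mul_rtail hLpos hL htail (inv_nonneg.2 hs.le)
    ((inv_lt_iff_one_lt_mul₀ hs).2 hαs)).comp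
      ((tendsto_rpow_atTop hs).comp tendsto_natCast_atTop_atTop)
  refine hlim.congr fun n => ?_
  simp [rpow_rpow_inv n.cast_nonneg hs.ne']

end RegularlyVaryingTail

theorem theta_nonneg {F : Measure ℝ} {n : ℕ} {b : ℝ} (hb : 0 ≤ b) (h : n * rtail F b ≤ 1) :
    0 ≤ theta F n b :=
  div_nonneg (neg_nonneg.2 (log_nonpos (mul_nonneg n.cast_nonneg (rtail_nonneg F b)) h)) hb

theorem theta_le_neg_log_rtail_div {F : Measure ℝ} {n : ℕ} {b : ℝ} (hn : 1 ≤ n) (hb : 0 ≤ b)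
    (hpos : 0 < rtail F b) : theta F n b ≤ -log (rtail F b) / b := by
  have hlogn : 0 ≤ log (n : ℝ) := log_nonneg (by exact_mod_cast hn)
  refine div_le_div_of_nonneg_right ?_ hb
  rw [log_mul (by positivity) hpos.ne']
  linarith

theorem natCast_mul_theta_rpow_le {F : Measure ℝ} {n : ℕ} {A κ t b : ℝ} (hn : 1 ≤ n)
    (hA : 0 ≤ A) (hκ : 0 ≤ κ) (ht : exp 1 ≤ t) (htb : t ≤ b) (hpos : 0 < rtail F b)
    (hlt : n * rtail F b < 1) (hlog : -log (rtail F b) ≤ A * log b) :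
    n * theta F n b ^ κ ≤ A ^ κ * (n * (log t / t) ^ κ) := by
  have ht0 : 0 < t := (exp_pos 1).trans_le ht
  have hb : 0 < b := ht0.trans_le htb
  have hθ : theta F n b ≤ A * (log t / t) :=
    calc theta F n b ≤ -log (rtail F b) / b := theta_le_neg_log_rtail_div hn hb.le hpos
      _ ≤ A * (log b / b) := by rw [mul_div_assoc']; gcongr
      _ ≤ A * (log t / t) :=
          mul_le_mul_of_nonneg_left (log_div_self_antitoneOn ht (ht.trans htb) htb) hA
  have hlogt : 0 ≤ log t / t := div_nonneg (log_nonneg ((one_le_exp zero_le_one).trans ht)) ht0.le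
  calc n * theta F n b ^ κ ≤ n * (A * (log t / t)) ^ κ := by
        gcongr; exact theta_nonneg hb.le hlt.le
    _ = A ^ κ * (n * (log t / t) ^ κ) := by rw [mul_rpow hA hlogt]; ring

theorem tendsto_mul_log_rpow_div_rpow_rpow {s κ : ℝ} (hs : 0 < s) (hκs : 1 < κ * s) :
    Tendsto (fun x : ℝ => x * (log (x ^ s) / x ^ s) ^ κ) atTop (𝓝 0) := by
  have hlim := ((isLittleO_log_rpow_rpow_atTop κ (sub_pos.2 hκs)).tendsto_div_nhds_zero).const_mul
    (s ^ κ)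
  rw [mul_zero] at hlim
  refine hlim.congr' ?_
  filter_upwards [eventually_gt_atTop 1] with x hx
  have hx0 : 0 < x := one_pos.trans hx
  rw [log_rpow hx0, mul_div_assoc, mul_rpow hs.le (div_nonneg (log_nonneg hx.le) (by positivity)),
    div_rpow (log_nonneg hx.le) (by positivity), ← rpow_mul hx0.le, rpow_sub hx0, rpow_one]
  field_simp

theorem one_lt_mul_one_div_min_two_add {α ε : ℝ} (hα : 1 < α) (hε : 0 < ε) :
    1 < α * (1 / min α 2 + ε) := by
  have hmin : 0 < min α 2 := lt_min (by linarith) two_pos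
  have h : 1 ≤ α * (1 / min α 2) := by
    rw [mul_one_div, one_le_div hmin]; exact min_le_left _ _
  nlinarith

theorem one_lt_ite_mul_one_div_min_two_add {α ε : ℝ} (hα : 1 < α) (hε : 0 < ε) :
    1 < (if 2 < α then 2 else (1 + ε) / (1 / α + ε)) * (1 / min α 2 + ε) := by
  split_ifs with h
  · rw [min_eq_right h.le]; linarith
  · have : 0 < 1 / α + ε := by positivity
    rw [min_eq_left (not_lt.1 h), div_mul_cancel₀ _ this.ne']; linarith

theorem stmt1_general
    (F : Measure ℝ) [IsProbabilityMeasure F]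
    (α : ℝ) (hα : 1 < α)
    (L : ℝ → ℝ) (hLpos : ∀ x > 0, 0 < L x) (hL : SlowlyVarying L)
    (htail : ∀ x > 0, rtail F x = L x * x ^ (-α))
    (β : ℝ) (hβ : β = 1 / min α 2)
    (ε : ℝ) (hε : 0 < ε)
    (κ : ℝ) (hκ : κ = if 2 < α then 2 else (1 + ε) / (1 / α + ε)) :
    (∃ N : ℕ, ∀ n ≥ N, ∀ b > (n : ℝ) ^ (β + ε), (n : ℝ) * rtail F b < 1) ∧
    (∀ δ > 0, ∃ N : ℕ, ∀ n ≥ N, ∀ b > (n : ℝ) ^ (β + ε),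
      (n : ℝ) * theta F n b ^ κ < δ) := by
  have hs : 0 < β + ε := by rw [hβ]; have := lt_min (by linarith : 0 < α) two_pos; positivity
  have hαs : 1 < α * (β + ε) := hβ ▸ one_lt_mul_one_div_min_two_add hα hε
  have hκs : 1 < κ * (β + ε) := hβ ▸ hκ ▸ one_lt_ite_mul_one_div_min_two_add hα hε
  have hκ0 : 0 ≤ κ := by by_contra! h; nlinarith
  have ht := (tendsto_rpow_atTop hs).comp tendsto_natCast_atTop_atTop
  have hsmall : ∀ᶠ n : ℕ in atTop, ∀ b > (n : ℝ) ^ (β + ε), (n : ℝ) * rtail F b < 1 := by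
    filter_upwards [(tendsto_natCast_mul_rtail_rpow hLpos hL htail hs hαs).eventually_lt_const
      one_pos] with n hn b hb
    exact (mul_le_mul_of_nonneg_left (rtail_antitone F hb.le) n.cast_nonneg).trans_lt hn
  refine ⟨eventually_atTop.1 hsmall, fun δ hδ => eventually_atTop.1 ?_⟩
  obtain ⟨A, hA, hlog⟩ := exists_eventually_neg_log_rtail_le (by linarith) hLpos hL htail
  have hlim := ((tendsto_mul_log_rpow_div_rpow_rpow hs hκs).comp
    tendsto_natCast_atTop_atTop).const_mul (A ^ κ)
  rw [mul_zero] at hlim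
  filter_upwards [hsmall, hlim.eventually_lt_const hδ, ht.eventually_forall_ge_atTop hlog,
    ht.eventually_ge_atTop (exp 1), eventually_ge_atTop 1] with n hn hlt hlogn he h1 b hb
  exact (natCast_mul_theta_rpow_le h1 hA.le hκ0 he hb.le
    (rtail_pos_of_eq hLpos htail ((exp_pos 1).trans_le (he.trans hb.le)))
    (hn b hb) (hlogn b hb.le)).trans_lt hlt

/-- For all large `n`, `n F̄(b) < 1` for every `b > n^{β+ε}` (so `θ_{n,b} > 0` is well
defined), and `sup { n θ_{n,b}^κ : b > n^{β+ε} } → 0` as `n → ∞`. -/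
theorem stmt1
    (F : Measure ℝ) [IsProbabilityMeasure F]
    (α : ℝ) (hα : 1 < α)
    (L : ℝ → ℝ) (hLpos : ∀ x > 0, 0 < L x) (hL : SlowlyVarying L)
    (htail : ∀ x > 0, rtail F x = L x * x ^ (-α))
    (hmeanInt : Integrable (fun x => x) F) (hmean : ∫ x, x ∂F = 0)
    (β : ℝ) (hβ : β = 1 / min α 2)
    (ε : ℝ) (hε : 0 < ε)
    (κ : ℝ) (hκ : κ = if 2 < α then 2 else (1 + ε) / (1 / α + ε)) :
    (∃ N : ℕ, ∀ n ≥ N, ∀ b > (n : ℝ) ^ (β + ε), (n : ℝ) * rtail F b < 1) ∧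
    (∀ δ > 0, ∃ N : ℕ, ∀ n ≥ N, ∀ b > (n : ℝ) ^ (β + ε),
      (n : ℝ) * theta F n b ^ κ < δ) :=
  stmt1_general F α hα L hLpos hL htail β hβ ε hε κ hκ
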